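/- arXiv:1409.6113 — 6 statements merged into one kernel-verified Lean document; each statement's English description precedes it below -/
import Mathlib

section
/- Let f : ℝ → ℝ be C¹ with f(0) = 0. If v : ℝ → ℝ is a positive solution of -v'' = f(v) on ℝ with v(t) → 0 as |t| → ∞, then there exists λ ∈ ℝ such that v is symmetric about λ, i.e. v(2λ - t) = v(t) for all t, and v'(t) > 0 for all t < λ. -/
/-!
Write the equation as the autonomous first-order system `(v, v')' = (v', -f v)`, whose
`C¹` vector field gives global uniqueness of trajectories. At a critical point `c` the
reflection `t ↦ (v (2c - t), -v' (2c - t))` is a trajectory through the same point, so `v` is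
symmetric about `c`. Two distinct critical points would make `v` periodic, which is
incompatible with decay; so the maximum point `λ` is the only critical point. Left of `λ`,
`v'` therefore has no zero, and it is positive somewhere left of any `t` because `v` rises from
`0` at `-∞`; by the intermediate value theorem `v' t > 0`.
-/

open Filter Set Topology

theorem ODE_solution_unique_of_contDiff {E : Type*} [NormedAddCommGroup E] [NormedSpace ℝ E]
    {F : E → E} (hF : ContDiff ℝ 1 F) {u w : ℝ → E} (hu : ∀ t, HasDerivAt u (F (u t)) t)
    (hw : ∀ t, HasDerivAt w (F (w t)) t) {t₀ : ℝ} (h₀ : u t₀ = w t₀) : u = w := by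
  have hu_cont : Continuous u := continuous_iff_continuousAt.mpr fun t => (hu t).continuousAt
  have hw_cont : Continuous w := continuous_iff_continuousAt.mpr fun t => (hw t).continuousAt
  have hopen : IsOpen {t | u t = w t} := by
    refine isOpen_iff_mem_nhds.mpr fun t₁ (h₁ : u t₁ = w t₁) => ?_
    obtain ⟨K, s, hs, hLip⟩ := (hF.contDiffAt (x := u t₁)).exists_lipschitzOnWith
    have hus : ∀ᶠ t in 𝓝 t₁, u t ∈ s := hu_cont.continuousAt.preimage_mem_nhds hs
    have hws : ∀ᶠ t in 𝓝 t₁, w t ∈ s :=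
      hw_cont.continuousAt.preimage_mem_nhds (h₁ ▸ hs)
    exact ODE_solution_unique_of_eventually (v := fun _ => F) (Eventually.of_forall fun _ => hLip)
      (hus.mono fun t ht => ⟨hu t, ht⟩) (hws.mono fun t ht => ⟨hw t, ht⟩) h₁
  have huniv : {t | u t = w t} = univ :=
    IsClopen.eq_univ ⟨isClosed_eq hu_cont hw_cont, hopen⟩ ⟨t₀, h₀⟩
  exact funext (eq_univ_iff_forall.mp huniv)

theorem Function.Periodic.eq_of_tendsto_atTop {v : ℝ → ℝ} {T a : ℝ} (hp : v.Periodic T)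
    (hT : 0 < T) (hlim : Tendsto v atTop (𝓝 a)) (t : ℝ) : v t = a := by
  have hseq : Tendsto (fun n : ℕ => v (t + n * T)) atTop (𝓝 a) :=
    hlim.comp <| tendsto_atTop_add_const_left _ t <|
      tendsto_natCast_atTop_atTop.atTop_mul_const hT
  exact tendsto_nhds_unique (tendsto_const_nhds.congr fun n => (hp.nat_mul n t).symm) hseq

section SecondOrder

variable {g v v' : ℝ → ℝ}

theorem reflect_eq_of_deriv_eq_zero (hg : ContDiff ℝ 1 g) (hv : ∀ t, HasDerivAt v (v' t) t)
    (hv' : ∀ t, HasDerivAt v' (g (v t)) t) {c : ℝ} (hc : v' c = 0) (t : ℝ) :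
    v (2 * c - t) = v t := by
  let F : ℝ × ℝ → ℝ × ℝ := fun p => (p.2, g p.1)
  have hF : ContDiff ℝ 1 F := contDiff_snd.prodMk (hg.comp contDiff_fst)
  have hu : ∀ t, HasDerivAt (fun t => (v t, v' t)) (F (v t, v' t)) t :=
    fun t => (hv t).prodMk (hv' t)
  have hw : ∀ t, HasDerivAt (fun t => (v (2 * c - t), -v' (2 * c - t)))
      (F (v (2 * c - t), -v' (2 * c - t))) t := fun t =>
    ((hv _).comp_const_sub _ t).prodMk (by simpa using ((hv' _).comp_const_sub _ t).fun_neg)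
  have hc' : (v c, v' c) = (v (2 * c - c), -v' (2 * c - c)) := by
    rw [show 2 * c - c = c by ring, hc, neg_zero]
  exact (congrArg Prod.fst (congrFun (ODE_solution_unique_of_contDiff hF hu hw hc') t)).symm

theorem periodic_of_deriv_eq_zero (hg : ContDiff ℝ 1 g) (hv : ∀ t, HasDerivAt v (v' t) t)
    (hv' : ∀ t, HasDerivAt v' (g (v t)) t) {c c' : ℝ} (hc : v' c = 0) (hc' : v' c' = 0) :
    v.Periodic (2 * (c' - c)) := fun t =>
  calc v (t + 2 * (c' - c)) = v (2 * c' - (t + 2 * (c' - c))) :=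
        (reflect_eq_of_deriv_eq_zero hg hv hv' hc' _).symm
    _ = v (2 * c - t) := by ring_nf
    _ = v t := reflect_eq_of_deriv_eq_zero hg hv hv' hc t

theorem eq_of_deriv_eq_zero_of_tendsto_atTop (hg : ContDiff ℝ 1 g)
    (hv : ∀ t, HasDerivAt v (v' t) t) (hv' : ∀ t, HasDerivAt v' (g (v t)) t) {a t₀ : ℝ}
    (hlim : Tendsto v atTop (𝓝 a)) (ht₀ : v t₀ ≠ a) {c c' : ℝ} (hc : v' c = 0)
    (hc' : v' c' = 0) : c = c' := by
  have hle : ∀ {c c'}, v' c = 0 → v' c' = 0 → c ≤ c' := fun hc hc' => by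
    by_contra! hlt
    exact ht₀ <| (periodic_of_deriv_eq_zero hg hv hv' hc' hc).eq_of_tendsto_atTop
      (by linarith) hlim t₀
  exact le_antisymm (hle hc hc') (hle hc' hc)

end SecondOrder

theorem pos_of_tendsto_atBot_of_deriv_ne_zero {v v' : ℝ → ℝ}
    (hv : ∀ t, HasDerivAt v (v' t) t) (hv'_cont : Continuous v') {a t : ℝ}
    (hlim : Tendsto v atBot (𝓝 a)) (ht : a < v t)
    (hne : ∀ s ≤ t, v' s ≠ 0) : 0 < v' t := by
  obtain ⟨s, hs_lt, hs_t⟩ :=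
    ((hlim.eventually (gt_mem_nhds ht)).and (eventually_lt_atBot t)).exists
  obtain ⟨ξ, hξ, hξ_slope⟩ := exists_hasDerivAt_eq_slope v v' hs_t
    (HasDerivAt.continuousOn fun x _ => hv x) fun x _ => hv x
  have hξ_pos : 0 < v' ξ := hξ_slope ▸ div_pos (by linarith) (by linarith)
  by_contra! ht_nonpos
  obtain ⟨x, hx, hx0⟩ := intermediate_value_Icc' hξ.2.le hv'_cont.continuousOn
    ⟨ht_nonpos, hξ_pos.le⟩
  exact hne x hx.2 hx0

theorem stmt_1_general (f : ℝ → ℝ) (hf : ContDiff ℝ 1 f)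
    (v : ℝ → ℝ) (hv : ContDiff ℝ 2 v)
    (hpos : ∀ t, 0 < v t)
    (hode : ∀ t, deriv (deriv v) t = -f (v t))
    (hdecay : Tendsto v (cocompact ℝ) (nhds 0)) :
    ∃ lam : ℝ, (∀ t, v (2 * lam - t) = v t) ∧ (∀ t < lam, 0 < deriv v t) := by
  have hv' : ContDiff ℝ 1 (deriv v) := hv.deriv'
  have hd : ∀ t, HasDerivAt v (deriv v t) t := fun t =>
    (hv.differentiable two_ne_zero t).hasDerivAt
  have hdd : ∀ t, HasDerivAt (deriv v) (-f (v t)) t := fun t =>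
    hode t ▸ (hv'.differentiable one_ne_zero t).hasDerivAt
  have hg : ContDiff ℝ 1 fun x => -f x := hf.neg
  obtain ⟨lam, hmax⟩ :=
    hv.continuous.exists_forall_ge' 0 (hdecay.eventually (ge_mem_nhds (hpos 0)))
  have hlam : deriv v lam = 0 :=
    IsLocalMax.hasDerivAt_eq_zero (Eventually.of_forall hmax) (hd lam)
  have hcrit_unique : ∀ c, deriv v c = 0 → c = lam := fun c hc =>
    eq_of_deriv_eq_zero_of_tendsto_atTop hg hd hdd (hdecay.mono_left atTop_le_cocompact)
      (hpos 0).ne' hc hlam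
  refine ⟨lam, reflect_eq_of_deriv_eq_zero hg hd hdd hlam, fun t ht => ?_⟩
  refine pos_of_tendsto_atBot_of_deriv_ne_zero hd hv'.continuous
    (hdecay.mono_left atBot_le_cocompact) (hpos t) fun s hs hs0 => ?_
  exact (hs.trans_lt ht).ne (hcrit_unique s hs0)

/-- A positive decaying solution of `-v'' = f v` is symmetric about some point `λ`,
and strictly increasing to the left of `λ`. -/
theorem stmt_1 (f : ℝ → ℝ) (hf : ContDiff ℝ 1 f) (hf0 : f 0 = 0)
    (v : ℝ → ℝ) (hv : ContDiff ℝ 2 v)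
    (hpos : ∀ t, 0 < v t)
    (hode : ∀ t, deriv (deriv v) t = -f (v t))
    (hdecay : Tendsto v (cocompact ℝ) (nhds 0)) :
    ∃ lam : ℝ, (∀ t, v (2 * lam - t) = v t) ∧ (∀ t < lam, 0 < deriv v t) :=
  stmt_1_general f hf v hv hpos hode hdecay
end

section
/- Let f : ℝ → ℝ be C¹ with f(0) = 0. If v and w are two positive solutions of -u'' = f(u) on ℝ with u(t) → 0 as |t| → ∞, then there exists τ ∈ ℝ such that w(t) = v(t - τ) for all t. That is, the positive decaying solution of the ODE is unique up to translation. -/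
open Filter Set Topology

/-!
A solution of `-u'' = f u` conserves the energy `u'^2/2 + F u`, where `F x = ∫₀ˣ f`. For a decaying
solution the energy vanishes, since `F (u t) → 0` and `u'` tends to `0` along mean-value points
of `u` on the intervals `[n, n + 1]`. Hence `F` vanishes at the maxima of `v` and `w`; if
`max v ≤ max w`, then `w` attains `max v` at a point where zero energy forces `w' = 0`. So `v` and
`w` have the same Cauchy data at suitable times, and uniqueness for the locally Lipschitz system
`(u, u')' = (u', -f u)` gives `w = v (· - τ)`.
-/

theorem eq_of_hasDerivAt_of_locallyLipschitz {E : Type*} [NormedAddCommGroup E] [NormedSpace ℝ E]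
    {V : E → E} (hV : LocallyLipschitz V) {γ δ : ℝ → E}
    (hγ : ∀ t, HasDerivAt γ (V (γ t)) t) (hδ : ∀ t, HasDerivAt δ (V (δ t)) t)
    {t₀ : ℝ} (h : γ t₀ = δ t₀) : γ = δ := by
  have hopen : IsOpen {t | γ t = δ t} := by
    refine isOpen_iff_mem_nhds.2 fun t (ht : γ t = δ t) => ?_
    obtain ⟨K, s, hs, hK⟩ := hV (γ t)
    have hγs : ∀ᶠ t' in 𝓝 t, γ t' ∈ s := (hγ t).continuousAt.preimage_mem_nhds hs
    have hδs : ∀ᶠ t' in 𝓝 t, δ t' ∈ s := (hδ t).continuousAt.preimage_mem_nhds (ht ▸ hs)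
    exact ODE_solution_unique_of_eventually (v := fun _ => V) (s := fun _ => s)
      (.of_forall fun _ => hK) (hγs.mono fun t' h => ⟨hγ t', h⟩)
      (hδs.mono fun t' h => ⟨hδ t', h⟩) ht
  have hclosed : IsClosed {t | γ t = δ t} :=
    isClosed_eq (continuous_iff_continuousAt.2 fun t => (hγ t).continuousAt)
      (continuous_iff_continuousAt.2 fun t => (hδ t).continuousAt)
  funext t
  exact eq_univ_iff_forall.1 (IsClopen.eq_univ ⟨hclosed, hopen⟩ ⟨t₀, h⟩) t

section SecondOrder

variable {f u : ℝ → ℝ}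

theorem hasDerivAt_phase (hu : ContDiff ℝ 2 u) (hode : ∀ t, deriv (deriv u) t = -f (u t))
    (t : ℝ) : HasDerivAt (fun t => (u t, deriv u t)) (deriv u t, -f (u t)) t :=
  hode t ▸ ((hu.differentiable two_ne_zero t).hasDerivAt.prodMk
    (hu.differentiable_deriv_two t).hasDerivAt)

theorem eq_comp_sub_of_deriv_eq (hf : LocallyLipschitz f) {v w : ℝ → ℝ}
    (hv : ContDiff ℝ 2 v) (hw : ContDiff ℝ 2 w)
    (hvode : ∀ t, deriv (deriv v) t = -f (v t)) (hwode : ∀ t, deriv (deriv w) t = -f (w t))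
    {a b : ℝ} (hab : v a = w b) (hab' : deriv v a = deriv w b) (t : ℝ) :
    w t = v (t - (b - a)) := by
  have hV : LocallyLipschitz fun p : ℝ × ℝ => (p.2, -f p.1) :=
    LipschitzWith.prod_snd.locallyLipschitz.prodMk
      (hf.comp LipschitzWith.prod_fst.locallyLipschitz).neg
  have hshift (t : ℝ) : HasDerivAt (fun t => (v (t - (b - a)), deriv v (t - (b - a))))
      (deriv v (t - (b - a)), -f (v (t - (b - a)))) t :=
    (hasDerivAt_phase hv hvode _).comp_sub_const t _
  have := eq_of_hasDerivAt_of_locallyLipschitz hV (hasDerivAt_phase hw hwode) hshift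
    (t₀ := b) (by simp [hab, hab'])
  exact congrArg Prod.fst (congrFun this t)

end SecondOrder

noncomputable def potential (f : ℝ → ℝ) (x : ℝ) : ℝ := ∫ y in (0 : ℝ)..x, f y

noncomputable def energy (f u : ℝ → ℝ) (t : ℝ) : ℝ := deriv u t ^ 2 / 2 + potential f (u t)

section Energy

variable {f u : ℝ → ℝ}

theorem hasDerivAt_potential (hf : Continuous f) (x : ℝ) : HasDerivAt (potential f) (f x) x :=
  intervalIntegral.integral_hasDerivAt_right (hf.intervalIntegrable _ _)
    (hf.stronglyMeasurableAtFilter _ _) hf.continuousAt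

theorem continuous_potential (hf : Continuous f) : Continuous (potential f) :=
  continuous_iff_continuousAt.2 fun x => (hasDerivAt_potential hf x).continuousAt

theorem hasDerivAt_energy (hf : Continuous f) (hu : ContDiff ℝ 2 u)
    (hode : ∀ t, deriv (deriv u) t = -f (u t)) (t : ℝ) : HasDerivAt (energy f u) 0 t := by
  have hu' := (hu.differentiable_deriv_two t).hasDerivAt
  have := ((hu'.pow 2).div_const 2).add
    ((hasDerivAt_potential hf (u t)).comp t (hu.differentiable two_ne_zero t).hasDerivAt)
  exact this.congr_deriv (by rw [hode]; ring)

theorem energy_eq (hf : Continuous f) (hu : ContDiff ℝ 2 u)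
    (hode : ∀ t, deriv (deriv u) t = -f (u t)) (s t : ℝ) : energy f u s = energy f u t :=
  is_const_of_deriv_eq_zero (fun t => (hasDerivAt_energy hf hu hode t).differentiableAt)
    (fun t => (hasDerivAt_energy hf hu hode t).deriv) s t

theorem energy_eq_zero_of_tendsto_atTop (hf : Continuous f) (hu : ContDiff ℝ 2 u)
    (hode : ∀ t, deriv (deriv u) t = -f (u t)) (hdecay : Tendsto u atTop (𝓝 0)) (t : ℝ) :
    energy f u t = 0 := by
  have hkinetic : Tendsto (fun s => deriv u s ^ 2 / 2) atTop (𝓝 (energy f u t)) := by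
    have hF := ((continuous_potential hf).tendsto 0).comp hdecay
    rw [potential, intervalIntegral.integral_same] at hF
    have := (tendsto_const_nhds (x := energy f u t)).sub hF
    rw [sub_zero] at this
    refine this.congr fun s => ?_
    rw [energy_eq hf hu hode t s, energy, Function.comp_apply, add_sub_cancel_right]
  choose ξ hξ hξu using fun n : ℕ => exists_deriv_eq_slope u (lt_add_one (n : ℝ))
    hu.continuous.continuousOn (hu.differentiable two_ne_zero).differentiableOn
  have hξ_top : Tendsto ξ atTop atTop :=
    tendsto_atTop_mono (fun n => (hξ n).1.le) tendsto_natCast_atTop_atTop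
  have hu'ξ : Tendsto (fun n => deriv u (ξ n)) atTop (𝓝 0) := by
    have hnat : Tendsto (fun n : ℕ => (n : ℝ)) atTop atTop := tendsto_natCast_atTop_atTop
    have := (hdecay.comp (tendsto_atTop_add_const_right _ 1 hnat)).sub (hdecay.comp hnat)
    simpa [hξu] using this
  refine tendsto_nhds_unique (hkinetic.comp hξ_top) ?_
  simpa [Function.comp_def] using (hu'ξ.pow 2).div_const 2

theorem potential_eq_zero_of_deriv_eq_zero {t : ℝ} (hE : energy f u t = 0) (h : deriv u t = 0) :
    potential f (u t) = 0 := by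
  simpa [energy, h] using hE

theorem exists_deriv_eq_zero_of_potential_eq_zero (hE : ∀ t, energy f u t = 0)
    (hu : Continuous u) (hdecay : Tendsto u atTop (𝓝 0)) {x t₀ : ℝ} (hx : 0 < x)
    (hxt : x ≤ u t₀) (hFx : potential f x = 0) : ∃ b, u b = x ∧ deriv u b = 0 := by
  obtain ⟨t₁, ht₁⟩ := (hdecay.eventually (eventually_lt_nhds hx)).exists
  obtain ⟨b, -, hb⟩ := intermediate_value_uIcc hu.continuousOn
    (mem_uIcc.2 (Or.inr ⟨ht₁.le, hxt⟩))
  refine ⟨b, hb, ?_⟩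
  have := hE b
  rw [energy, hb, hFx, add_zero, div_eq_zero_iff] at this
  exact pow_eq_zero_iff two_ne_zero |>.1 (this.resolve_right two_ne_zero)

end Energy

theorem stmt_3_general (f : ℝ → ℝ) (hf : ContDiff ℝ 1 f)
    (v w : ℝ → ℝ) (hv : ContDiff ℝ 2 v) (hw : ContDiff ℝ 2 w)
    (hvpos : ∀ t, 0 < v t) (hwpos : ∀ t, 0 < w t)
    (hvode : ∀ t, deriv (deriv v) t = -f (v t))
    (hwode : ∀ t, deriv (deriv w) t = -f (w t))
    (hvdecay : Tendsto v (cocompact ℝ) (nhds 0))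
    (hwdecay : Tendsto w (cocompact ℝ) (nhds 0)) :
    ∃ τ : ℝ, ∀ t, w t = v (t - τ) := by
  have hv_top := hvdecay.mono_left atTop_le_cocompact
  have hw_top := hwdecay.mono_left atTop_le_cocompact
  have hvE := energy_eq_zero_of_tendsto_atTop hf.continuous hv hvode hv_top
  have hwE := energy_eq_zero_of_tendsto_atTop hf.continuous hw hwode hw_top
  obtain ⟨a₀, ha₀⟩ :=
    hv.continuous.exists_forall_ge' 0 (hvdecay.eventually (eventually_le_nhds (hvpos 0)))
  obtain ⟨b₀, hb₀⟩ :=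
    hw.continuous.exists_forall_ge' 0 (hwdecay.eventually (eventually_le_nhds (hwpos 0)))
  have hva₀ : deriv v a₀ = 0 := IsLocalMax.deriv_eq_zero (.of_forall ha₀)
  have hwb₀ : deriv w b₀ = 0 := IsLocalMax.deriv_eq_zero (.of_forall hb₀)
  obtain ⟨a, b, hab, ha, hb⟩ : ∃ a b, v a = w b ∧ deriv v a = 0 ∧ deriv w b = 0 := by
    rcases le_total (v a₀) (w b₀) with h | h
    · obtain ⟨b, hb, hb'⟩ := exists_deriv_eq_zero_of_potential_eq_zero hwE hw.continuous hw_top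
        (hvpos a₀) h (potential_eq_zero_of_deriv_eq_zero (hvE a₀) hva₀)
      exact ⟨a₀, b, hb.symm, hva₀, hb'⟩
    · obtain ⟨a, ha, ha'⟩ := exists_deriv_eq_zero_of_potential_eq_zero hvE hv.continuous hv_top
        (hwpos b₀) h (potential_eq_zero_of_deriv_eq_zero (hwE b₀) hwb₀)
      exact ⟨a, b₀, ha, ha', hwb₀⟩
  exact ⟨b - a,
    eq_comp_sub_of_deriv_eq hf.locallyLipschitz hv hw hvode hwode hab (ha.trans hb.symm)⟩

/-- Uniqueness up to translation of the positive decaying solution to `-u'' = f u`. -/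
theorem stmt_3 (f : ℝ → ℝ) (hf : ContDiff ℝ 1 f) (hf0 : f 0 = 0)
    (v w : ℝ → ℝ) (hv : ContDiff ℝ 2 v) (hw : ContDiff ℝ 2 w)
    (hvpos : ∀ t, 0 < v t) (hwpos : ∀ t, 0 < w t)
    (hvode : ∀ t, deriv (deriv v) t = -f (v t))
    (hwode : ∀ t, deriv (deriv w) t = -f (w t))
    (hvdecay : Tendsto v (cocompact ℝ) (nhds 0))
    (hwdecay : Tendsto w (cocompact ℝ) (nhds 0)) :
    ∃ τ : ℝ, ∀ t, w t = v (t - τ) :=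
  stmt_3_general f hf v w hv hw hvpos hwpos hvode hwode hvdecay hwdecay
end

section
/- Let f : ℝ → ℝ be C¹ with f(t) = 0 for all t ∈ [0, δ) for some δ > 0. Then any nonnegative solution v : ℝ → ℝ of -v'' = f(v) with v(t) → 0 as t → +∞ and t → -∞ is identically zero. -/
/-! Once the solution enters `[0, δ)` it solves `v'' = 0`. Near `+∞` this forces `v = v' = 0`, and
the points where `v = v' = 0` form a clopen set, since around each of them `v` stays below `δ` and
`v'' = 0` with zero Cauchy data leaves only the zero solution. -/

open Filter Set Metric Topology

theorem IsOpen.eqOn_zero_of_deriv_deriv_eqOn_zero {v : ℝ → ℝ} {U : Set ℝ} (hU : IsOpen U)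
    (hU' : IsPreconnected U) (hv : Differentiable ℝ v) (hv' : Differentiable ℝ (deriv v))
    (hv'' : EqOn (deriv (deriv v)) 0 U) {t₀ : ℝ} (ht₀ : t₀ ∈ U) (h0 : v t₀ = 0)
    (h1 : deriv v t₀ = 0) :
    EqOn v 0 U ∧ EqOn (deriv v) 0 U := by
  have hderiv : EqOn (deriv v) 0 U := fun t ht =>
    (hU.is_const_of_deriv_eq_zero hU' hv'.differentiableOn hv'' ht ht₀).trans h1
  exact ⟨fun t ht => (hU.is_const_of_deriv_eq_zero hU' hv.differentiableOn hderiv ht ht₀).trans h0,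
    hderiv⟩

theorem eqOn_Ioi_of_tendsto_atTop_of_deriv_deriv_eqOn_zero {v : ℝ → ℝ} {T L : ℝ}
    (hv : Differentiable ℝ v) (hv' : Differentiable ℝ (deriv v))
    (hv'' : EqOn (deriv (deriv v)) 0 (Ioi T)) (hlim : Tendsto v atTop (𝓝 L)) :
    EqOn v (fun _ => L) (Ioi T) ∧ EqOn (deriv v) 0 (Ioi T) := by
  have hT : T + 1 ∈ Ioi T := by simp
  have hslope_const : EqOn (deriv v) (fun _ => deriv v (T + 1)) (Ioi T) := fun t ht =>
    isOpen_Ioi.is_const_of_deriv_eq_zero isPreconnected_Ioi hv'.differentiableOn hv'' ht hT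
  -- by the mean value theorem `v (t + 1) - v t` is the constant slope, and it tends to `L - L`
  have hincr : ∀ᶠ t in atTop, v (t + 1) - v t = deriv v (T + 1) := by
    filter_upwards [eventually_gt_atTop T] with t ht
    obtain ⟨c, hc, hc_eq⟩ := exists_deriv_eq_slope v (lt_add_one t) hv.continuous.continuousOn
      hv.differentiableOn
    have hc_slope : deriv v c = deriv v (T + 1) := hslope_const (ht.trans hc.1)
    rw [← hc_slope, hc_eq, add_sub_cancel_left, div_one]
  have hlim_incr : Tendsto (fun t => v (t + 1) - v t) atTop (𝓝 (L - L)) :=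
    (hlim.comp (tendsto_atTop_add_const_right _ 1 tendsto_id)).sub hlim
  have hslope : deriv v (T + 1) = 0 := by
    rw [← sub_self L]
    exact tendsto_nhds_unique (tendsto_const_nhds.congr' (hincr.mono fun _ h => h.symm)) hlim_incr
  have hderiv : EqOn (deriv v) 0 (Ioi T) := fun t ht => (hslope_const ht).trans hslope
  have hconst : EqOn v (fun _ => v (T + 1)) (Ioi T) := fun t ht =>
    isOpen_Ioi.is_const_of_deriv_eq_zero isPreconnected_Ioi hv.differentiableOn hderiv ht hT
  have hL : v (T + 1) = L :=
    tendsto_nhds_unique (tendsto_const_nhds.congr'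
      ((eventually_gt_atTop T).mono fun _ h => (hconst h).symm)) hlim
  exact ⟨fun t ht => (hconst ht).trans hL, hderiv⟩

theorem eq_zero_of_deriv_deriv_eventually_eq_zero {v : ℝ → ℝ} (hv : Differentiable ℝ v)
    (hv' : Differentiable ℝ (deriv v))
    (hv'' : ∀ t, v t = 0 → ∀ᶠ s in 𝓝 t, deriv (deriv v) s = 0)
    {t₀ : ℝ} (h0 : v t₀ = 0) (h1 : deriv v t₀ = 0) (t : ℝ) :
    v t = 0 := by
  set Z := {t | v t = 0 ∧ deriv v t = 0}
  have hZ_closed : IsClosed Z :=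
    (isClosed_eq hv.continuous continuous_const).inter (isClosed_eq hv'.continuous continuous_const)
  have hZ_open : IsOpen Z := by
    refine isOpen_iff.mpr fun s ⟨hs0, hs1⟩ => ?_
    obtain ⟨ε, hε, hball⟩ := eventually_nhds_iff_ball.mp (hv'' s hs0)
    have hzero := isOpen_ball.eqOn_zero_of_deriv_deriv_eqOn_zero (convex_ball s ε).isPreconnected
      hv hv' hball (mem_ball_self hε) hs0 hs1
    exact ⟨ε, hε, fun r hr => ⟨hzero.1 hr, hzero.2 hr⟩⟩
  have hZ : Z = univ := IsClopen.eq_univ ⟨hZ_closed, hZ_open⟩ ⟨t₀, h0, h1⟩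
  exact (hZ ▸ mem_univ t : t ∈ Z).1

theorem stmt_4_general (f : ℝ → ℝ)
    (δ : ℝ) (hδ : 0 < δ) (hflat : ∀ t ∈ Set.Ico (0:ℝ) δ, f t = 0)
    (v : ℝ → ℝ) (hv : ContDiff ℝ 2 v)
    (hnonneg : ∀ t, 0 ≤ v t)
    (hode : ∀ t, deriv (deriv v) t = -f (v t))
    (hdecaytop : Tendsto v atTop (nhds 0)) :
    ∀ t, v t = 0 := by
  have hv1 : Differentiable ℝ v := hv.differentiable two_ne_zero
  have hv2 : Differentiable ℝ (deriv v) := hv.differentiable_deriv_two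
  have hlinear : ∀ t, v t < δ → deriv (deriv v) t = 0 := fun t ht => by
    rw [hode, hflat _ ⟨hnonneg t, ht⟩, neg_zero]
  have hlinear_near_zeros : ∀ t, v t = 0 → ∀ᶠ s in 𝓝 t, deriv (deriv v) s = 0 := fun t ht =>
    (hv1.continuous.tendsto t).eventually (gt_mem_nhds (ht ▸ hδ)) |>.mono hlinear
  obtain ⟨T, hT⟩ := eventually_atTop.mp (hdecaytop.eventually (gt_mem_nhds hδ))
  have htail := eqOn_Ioi_of_tendsto_atTop_of_deriv_deriv_eqOn_zero hv1 hv2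
    (fun t ht => hlinear t (hT t (le_of_lt ht))) hdecaytop
  have hT1 : T + 1 ∈ Ioi T := by simp
  exact eq_zero_of_deriv_deriv_eventually_eq_zero hv1 hv2 hlinear_near_zeros (htail.1 hT1)
    (htail.2 hT1)

/-- If `f` vanishes on `[0,δ)`, any nonnegative decaying solution of `-v'' = f v`
is identically zero. -/
theorem stmt_4 (f : ℝ → ℝ) (hf : ContDiff ℝ 1 f)
    (δ : ℝ) (hδ : 0 < δ) (hflat : ∀ t ∈ Set.Ico (0:ℝ) δ, f t = 0)
    (v : ℝ → ℝ) (hv : ContDiff ℝ 2 v)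
    (hnonneg : ∀ t, 0 ≤ v t)
    (hode : ∀ t, deriv (deriv v) t = -f (v t))
    (hdecaytop : Tendsto v atTop (nhds 0))
    (hdecaybot : Tendsto v atBot (nhds 0)) :
    ∀ t, v t = 0 :=
  stmt_4_general f δ hδ hflat v hv hnonneg hode hdecaytop
end

section
/- Let v : ℝ → ℝ be a radial profile solving -v''(r) - ((N-1)/r) v'(r) = f(v(r)) for r > 0, where N ≥ 1 and f(t) = t^p - t with p > 1, F(t) = t^{p+1}/(p+1) - t²/2. Assume v(r), v'(r) → 0 as r → ∞ and v'(0) = 0, v > 0. Then the energy E(r) = ½(v'(r))² + F(v(r)) is strictly decreasing on (0, ∞), E(r) > 0 for all r ≥ 0, and consequently v(0) > ((p+1)/2)^{1/(p-1)}. -/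
/-!
Along a solution of `v'' + (c/r) v' + f(v) = 0` the energy `E = ½ v'² + F(v)`, `F' = f`,
satisfies `E' = -(c/r) v'²`, so it is nonincreasing, and it tends to `0` because `v, v' → 0`;
hence `E ≥ 0`. If `E` were constant on an interval, `v` would be constant there and the
equation would force `f(v) = 0`, i.e. `v = 1`, where `E = F(1) = 1/(p+1) - 1/2 < 0`.
So `E` is strictly decreasing, hence positive, and `F(v(0)) = E(0) > 0` is the bound on `v(0)`.
-/

open Filter Set Topology

noncomputable def powPotential (p t : ℝ) : ℝ := t ^ (p + 1) / (p + 1) - t ^ 2 / 2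

theorem hasDerivAt_powPotential {p : ℝ} (hp : 0 ≤ p) (t : ℝ) :
    HasDerivAt (powPotential p) (t ^ p - t) t := by
  have hpow : HasDerivAt (fun x : ℝ => x ^ (p + 1)) ((p + 1) * t ^ p) t := by
    simpa using Real.hasDerivAt_rpow_const (x := t) (p := p + 1) (Or.inr (by linarith))
  refine ((hpow.div_const (p + 1)).sub ((hasDerivAt_pow 2 t).div_const 2)).congr_deriv ?_
  rw [mul_div_cancel_left₀ _ (by linarith)]
  ring

theorem powPotential_eq_sq_mul {p t : ℝ} (ht : 0 < t) :
    powPotential p t = t ^ 2 * (t ^ (p - 1) / (p + 1) - 1 / 2) := by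
  have hsplit : t ^ (p + 1) = t ^ (p - 1) * t ^ 2 := by
    rw [← Real.rpow_natCast, ← Real.rpow_add ht]
    congr 1
    ring
  rw [powPotential, hsplit]
  ring

theorem powPotential_neg_of_rpow_sub_self_eq_zero {p t : ℝ} (hp : 1 < p) (ht : 0 < t)
    (h : t ^ p - t = 0) : powPotential p t < 0 := by
  have hone : t ^ (p - 1) = 1 := by
    rw [Real.rpow_sub_one ht.ne', sub_eq_zero.mp h, div_self ht.ne']
  rw [powPotential_eq_sq_mul ht, hone]
  have : 1 / (p + 1) < 1 / 2 := one_div_lt_one_div_of_lt two_pos (by linarith)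
  nlinarith [pow_pos ht 2]

theorem rpow_one_div_sub_one_lt_of_powPotential_pos {p t : ℝ} (hp : 1 < p) (ht : 0 < t)
    (h : 0 < powPotential p t) : ((p + 1) / 2) ^ (1 / (p - 1)) < t := by
  rw [powPotential_eq_sq_mul ht] at h
  have hlt : (p + 1) / 2 < t ^ (p - 1) := by
    have := (pos_of_mul_pos_right h (pow_pos ht 2).le)
    rw [sub_pos, div_lt_div_iff₀ two_pos (by linarith)] at this
    linarith
  rw [one_div, Real.rpow_inv_lt_iff_of_pos (by linarith) ht.le (by linarith)]
  exact hlt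

theorem AntitoneOn.nonneg_of_tendsto_atTop {g : ℝ → ℝ} {a r : ℝ} (hg : AntitoneOn g (Ici a))
    (hlim : Tendsto g atTop (𝓝 0)) (hr : a ≤ r) : 0 ≤ g r := by
  refine le_of_tendsto hlim ?_
  filter_upwards [eventually_ge_atTop r] with s hs
  exact hg hr (hr.trans hs) hs

theorem deriv_eq_zero_of_forall_mem_Ioo_eq {g : ℝ → ℝ} {a b x c : ℝ}
    (h : ∀ y ∈ Ioo a b, g y = c) (hx : x ∈ Ioo a b) : deriv g x = 0 := by
  have hloc : g =ᶠ[𝓝 x] fun _ => c := eventually_of_mem (Ioo_mem_nhds hx.1 hx.2) h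
  rw [hloc.deriv_eq, deriv_const]

noncomputable def radialEnergy (F v : ℝ → ℝ) (r : ℝ) : ℝ := 1 / 2 * deriv v r ^ 2 + F (v r)

section RadialEnergy

variable {v f F : ℝ → ℝ} {c : ℝ}

theorem tendsto_radialEnergy_atTop (hF : ContinuousAt F 0) (hF0 : F 0 = 0)
    (hv : Tendsto v atTop (𝓝 0)) (hv' : Tendsto (deriv v) atTop (𝓝 0)) :
    Tendsto (radialEnergy F v) atTop (𝓝 0) := by
  have hpot : Tendsto (fun r => F (v r)) atTop (𝓝 0) := hF0 ▸ hF.tendsto.comp hv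
  have hkin := (hv'.pow 2).const_mul (1 / 2 : ℝ)
  show Tendsto (fun r => 1 / 2 * deriv v r ^ 2 + F (v r)) atTop (𝓝 0)
  simpa using hkin.add hpot

theorem hasDerivAt_radialEnergy (hv : ContDiff ℝ 2 v) (hF : ∀ t, HasDerivAt F (f t) t)
    (r : ℝ) :
    HasDerivAt (radialEnergy F v) (deriv v r * (deriv (deriv v) r + f (v r))) r := by
  have hkin := (hv.differentiable_deriv_two r).hasDerivAt.pow 2
  have hpot := (hF (v r)).comp r (hv.differentiable two_ne_zero r).hasDerivAt
  exact ((hkin.const_mul (1 / 2 : ℝ)).add hpot).congr_deriv (by ring)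

theorem deriv_radialEnergy (hv : ContDiff ℝ 2 v) (hF : ∀ t, HasDerivAt F (f t) t)
    (hode : ∀ r, 0 < r → deriv (deriv v) r + c / r * deriv v r + f (v r) = 0)
    {r : ℝ} (hr : 0 < r) :
    deriv (radialEnergy F v) r = -(c / r) * deriv v r ^ 2 := by
  rw [(hasDerivAt_radialEnergy hv hF r).deriv]
  linear_combination deriv v r * hode r hr

theorem antitoneOn_radialEnergy (hc : 0 ≤ c) (hv : ContDiff ℝ 2 v)
    (hF : ∀ t, HasDerivAt F (f t) t)
    (hode : ∀ r, 0 < r → deriv (deriv v) r + c / r * deriv v r + f (v r) = 0) :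
    AntitoneOn (radialEnergy F v) (Ici 0) := by
  have hdiff : Differentiable ℝ (radialEnergy F v) := fun r =>
    (hasDerivAt_radialEnergy hv hF r).differentiableAt
  refine antitoneOn_of_deriv_nonpos (convex_Ici 0) hdiff.continuous.continuousOn
    hdiff.differentiableOn fun r hr => ?_
  rw [interior_Ici] at hr
  rw [deriv_radialEnergy hv hF hode hr, neg_mul]
  exact neg_nonpos.mpr (mul_nonneg (div_nonneg hc (le_of_lt hr)) (sq_nonneg _))

theorem strictAntiOn_radialEnergy (hc : 0 < c) (hv : ContDiff ℝ 2 v)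
    (hF : ∀ t, HasDerivAt F (f t) t)
    (hode : ∀ r, 0 < r → deriv (deriv v) r + c / r * deriv v r + f (v r) = 0)
    (hrest : ∀ r, 0 < r → deriv v r = 0 → f (v r) ≠ 0) :
    StrictAntiOn (radialEnergy F v) (Ioi 0) := by
  have hanti := antitoneOn_radialEnergy hc.le hv hF hode
  intro a ha b hb hab
  refine (hanti (mem_Ici.2 (le_of_lt ha)) (mem_Ici.2 (le_of_lt hb)) hab.le).lt_of_ne fun heq => ?_
  have hconst : ∀ s ∈ Ioo a b, radialEnergy F v s = radialEnergy F v a := fun s hs => by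
    have hs0 : s ∈ Ici 0 := mem_Ici.2 (ha.trans hs.1).le
    linarith [hanti (mem_Ici.2 (le_of_lt ha)) hs0 hs.1.le,
      hanti hs0 (mem_Ici.2 (le_of_lt hb)) hs.2.le]
  have hflat : ∀ s ∈ Ioo a b, deriv v s = 0 := fun s hs => by
    have h := deriv_radialEnergy hv hF hode (ha.trans hs.1)
    rw [deriv_eq_zero_of_forall_mem_Ioo_eq hconst hs, eq_comm, mul_eq_zero] at h
    exact pow_eq_zero_iff two_ne_zero |>.mp <|
      h.resolve_left (neg_ne_zero.mpr (div_pos hc (ha.trans hs.1)).ne')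
  have hm : (a + b) / 2 ∈ Ioo a b := ⟨by linarith, by linarith⟩
  have hm0 : 0 < (a + b) / 2 := ha.trans hm.1
  refine hrest _ hm0 (hflat _ hm) ?_
  simpa [hflat _ hm, deriv_eq_zero_of_forall_mem_Ioo_eq hflat hm] using hode _ hm0

end RadialEnergy

/-- For a positive radial profile of `-Δu = u^p - u`, the energy
`E(r) = ½(v')² + F(v)` is strictly decreasing, positive, and forces
`v(0) > ((p+1)/2)^{1/(p-1)}`. -/
theorem stmt_6 (N : ℕ) (hN : 2 ≤ N) (p : ℝ) (hp : 1 < p)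
    (f : ℝ → ℝ) (hfdef : ∀ t, f t = t ^ p - t)
    (F : ℝ → ℝ) (hFdef : ∀ t, F t = t ^ (p + 1) / (p + 1) - t ^ 2 / 2)
    (v : ℝ → ℝ) (hv : ContDiff ℝ 2 v)
    (hpos : ∀ r, 0 ≤ r → 0 < v r)
    (hode : ∀ r, 0 < r →
      deriv (deriv v) r + ((N - 1 : ℝ) / r) * deriv v r + f (v r) = 0)
    (hv'0 : deriv v 0 = 0)
    (hdecay : Tendsto v atTop (nhds 0))
    (hdecay' : Tendsto (deriv v) atTop (nhds 0))
    (E : ℝ → ℝ) (hEdef : ∀ r, E r = (1/2) * (deriv v r) ^ 2 + F (v r)) :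
    StrictAntiOn E (Set.Ioi (0:ℝ)) ∧ (∀ r, 0 ≤ r → 0 < E r) ∧
      v 0 > ((p + 1) / 2) ^ (1 / (p - 1)) := by
  obtain rfl : F = powPotential p := funext hFdef
  obtain rfl : f = fun t => t ^ p - t := funext hfdef
  obtain rfl : E = radialEnergy (powPotential p) v := funext hEdef
  set E := radialEnergy (powPotential p) v
  have hc : (0 : ℝ) < N - 1 := by
    have : (2 : ℝ) ≤ N := by exact_mod_cast hN
    linarith
  have hF := hasDerivAt_powPotential (by linarith : 0 ≤ p)
  have hF0 : powPotential p 0 = 0 := by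
    simp [powPotential, Real.zero_rpow (by linarith : p + 1 ≠ 0)]
  have hanti : AntitoneOn E (Ici 0) := antitoneOn_radialEnergy hc.le hv hF hode
  have hnonneg : ∀ r, 0 ≤ r → 0 ≤ E r := fun r => hanti.nonneg_of_tendsto_atTop
    (tendsto_radialEnergy_atTop (hF 0).continuousAt hF0 hdecay hdecay')
  have hstrict : StrictAntiOn E (Ioi 0) :=
    strictAntiOn_radialEnergy hc hv hF hode fun r hr hv' hf0 => by
      have h := hnonneg r hr.le
      simp only [E, radialEnergy, hv'] at h
      linarith [powPotential_neg_of_rpow_sub_self_eq_zero hp (hpos r hr.le) hf0]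
  have hEpos : ∀ r, 0 ≤ r → 0 < E r := fun r hr =>
    calc 0 ≤ E (r + 2) := hnonneg _ (by linarith)
      _ < E (r + 1) := hstrict (mem_Ioi.2 (by linarith)) (mem_Ioi.2 (by linarith)) (by linarith)
      _ ≤ E r := hanti (mem_Ici.2 hr) (mem_Ici.2 (by linarith)) (by linarith)
  refine ⟨hstrict, hEpos, rpow_one_div_sub_one_lt_of_powPotential_pos hp (hpos 0 le_rfl) ?_⟩
  simpa [E, radialEnergy, hv'0] using hEpos 0 le_rfl
end

section
/- Let N ≥ 2 and let v : [0,∞) → ℝ be a positive radial solution of -v'' - ((N-1)/r) v' = f(v), v'(0) = 0, with f C¹, f(0)=0, F the primitive of f vanishing at 0. Assume v(r) ≤ C r^{-(N+σ)/2} and |v'(r)| ≤ C r^{-(N+σ)/2} for r ≥ M, for some σ > 0, and F(v(r)) r^N → 0, (v'(r))² r^N → 0 as r → ∞. Then ((N-2)/(2N)) ∫₀^∞ (v')² r^{N-1} dr = ∫₀^∞ F(v) r^{N-1} dr. -/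
/-!
The Pohozaev energy `E(r) = (v'(r)² / 2 + F(v(r))) r^N` satisfies, along solutions of the ODE,
`E' = N F(v) r^(N-1) - (N-2)/2 · v'² r^(N-1)`. It vanishes at `r = 0` and, by assumption,
at infinity. Since `F(u) = O(u²)` at `0`, the decay bounds make both terms of `E'` of order
`r^(-1-σ)`, hence integrable, and integrating `E'` over `(0, ∞)` gives the identity.
-/

open Filter Set MeasureTheory Asymptotics Topology

theorem isBigO_integral_sq {f : ℝ → ℝ} (hf : Continuous f) (hf₀ : DifferentiableAt ℝ f 0)
    (h0 : f 0 = 0) : (fun u => ∫ t in (0:ℝ)..u, f t) =O[𝓝 0] fun u => u ^ 2 := by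
  have hderiv : ∀ u, HasDerivAt (fun u => ∫ t in (0:ℝ)..u, f t) (f u) u :=
    fun u => (hf.integral_hasStrictDerivAt 0 u).hasDerivAt
  have hlin : (fun u => ‖fderiv ℝ (fun u => ∫ t in (0:ℝ)..u, f t) u‖) =O[𝓝 0]
      fun u => ‖u - 0‖ ^ (1:ℝ) := by
    simp_rw [← norm_deriv_eq_norm_fderiv, (hderiv _).deriv, Real.rpow_one]
    simpa [h0] using hf₀.isBigO_sub.norm_left.norm_right
  have := isBigO_norm_rpow_add_one_of_fderiv_of_apply_eq_zero zero_le_one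
    (Eventually.of_forall fun u => (hderiv u).differentiableAt) hlin.of_norm_left (by simp)
  norm_num at this
  simpa using this

theorem isBigO_rpow_of_abs_le {u : ℝ → ℝ} {C a : ℝ}
    (h : ∀ᶠ r in atTop, |u r| ≤ C * r ^ (-a)) : u =O[atTop] fun r => r ^ (-a) := by
  refine .of_bound C ?_
  filter_upwards [h, eventually_ge_atTop 0] with r hr hr0
  rwa [Real.norm_eq_abs, Real.norm_of_nonneg (Real.rpow_nonneg hr0 _)]

theorem integrableOn_Ioi_of_isBigO_sq_mul_rpow {g u : ℝ → ℝ} {a p : ℝ} (hg : Continuous g)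
    (hgu : g =O[atTop] fun r => u r ^ 2 * r ^ p) (hu : u =O[atTop] fun r => r ^ (-a))
    (hpa : p - 2 * a < -1) : IntegrableOn g (Ioi 0) := by
  have hdecay : g =O[atTop] fun r => r ^ (p - 2 * a) := by
    refine hgu.trans <| ((hu.pow 2).mul (isBigO_refl (fun r : ℝ => r ^ p) _)).congr' .rfl ?_
    filter_upwards [eventually_gt_atTop 0] with r hr
    rw [← Real.rpow_natCast, ← Real.rpow_mul hr.le, ← Real.rpow_add hr]
    ring_nf
  exact (hg.locallyIntegrable.locallyIntegrableOn _ |>.integrableOn_of_isBigO_atTop hdecay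
    (integrableAtFilter_rpow_atTop_iff.2 hpa)).mono_set Ioi_subset_Ici_self

noncomputable def pohozaevEnergy (N : ℝ) (F v : ℝ → ℝ) (r : ℝ) : ℝ :=
  (deriv v r ^ 2 / 2 + F (v r)) * r ^ N

section PohozaevEnergy

variable {N : ℝ} {F v : ℝ → ℝ}

theorem pohozaevEnergy_zero (hN : N ≠ 0) : pohozaevEnergy N F v 0 = 0 := by
  simp [pohozaevEnergy, Real.zero_rpow hN]

theorem continuous_pohozaevEnergy (hN : 0 ≤ N) (hF : Continuous F) (hv : ContDiff ℝ 1 v) :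
    Continuous (pohozaevEnergy N F v) :=
  (((hv.continuous_deriv le_rfl).pow 2).div_const 2 |>.add (hF.comp hv.continuous)).mul
    (Real.continuous_rpow_const hN)

theorem tendsto_pohozaevEnergy_atTop (hF : Tendsto (fun r => F (v r) * r ^ N) atTop (𝓝 0))
    (hv : Tendsto (fun r => deriv v r ^ 2 * r ^ N) atTop (𝓝 0)) :
    Tendsto (pohozaevEnergy N F v) atTop (𝓝 0) := by
  convert (hv.div_const 2).add hF using 2 with r
  · simp only [pohozaevEnergy]; ring
  · simp

theorem hasDerivAt_pohozaevEnergy {f : ℝ → ℝ} {r : ℝ} (hr : 0 < r)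
    (hv : DifferentiableAt ℝ v r) (hv' : DifferentiableAt ℝ (deriv v) r)
    (hF : HasDerivAt F (f (v r)) (v r))
    (hode : deriv (deriv v) r + (N - 1) / r * deriv v r + f (v r) = 0) :
    HasDerivAt (pohozaevEnergy N F v)
      (N * (F (v r) * r ^ (N - 1)) - (N - 2) / 2 * (deriv v r ^ 2 * r ^ (N - 1))) r := by
  have hpow : HasDerivAt (fun s : ℝ => s ^ N) (N * r ^ (N - 1)) r :=
    Real.hasDerivAt_rpow_const (Or.inl hr.ne')
  have hE := (((hv'.hasDerivAt.fun_pow 2).div_const 2).fun_add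
    (hF.comp r hv.hasDerivAt)).fun_mul hpow
  refine hE.congr_deriv ?_
  have hrN : r ^ N = r ^ (N - 1) * r := by rw [Real.rpow_sub_one hr.ne']; field_simp
  have hv'' : deriv (deriv v) r = -((N - 1) / r * deriv v r) - f (v r) := by linarith
  rw [hrN, hv'']
  simp only [Function.comp_apply]
  field_simp
  ring

end PohozaevEnergy

theorem stmt_9_general (N : ℕ) (hN : 2 ≤ N)
    (f : ℝ → ℝ) (hf : ContDiff ℝ 1 f) (hf0 : f 0 = 0)
    (F : ℝ → ℝ) (hF : ∀ u, F u = ∫ t in (0:ℝ)..u, f t)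
    (v : ℝ → ℝ) (hv : ContDiff ℝ 2 v)
    (hpos : ∀ r, 0 ≤ r → 0 < v r)
    (hode : ∀ r, 0 < r →
      deriv (deriv v) r + ((N - 1 : ℝ) / r) * deriv v r + f (v r) = 0)
    (C M σ : ℝ) (hσ : 0 < σ)
    (hbound : ∀ r : ℝ, M ≤ r →
      v r ≤ C * r ^ (-((N + σ) / 2)) ∧ |deriv v r| ≤ C * r ^ (-((N + σ) / 2)))
    (hbdry1 : Tendsto (fun r : ℝ => F (v r) * r ^ (N : ℝ)) atTop (nhds 0))
    (hbdry2 : Tendsto (fun r : ℝ => (deriv v r) ^ 2 * r ^ (N : ℝ)) atTop (nhds 0)) :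
    ((N:ℝ) - 2) / (2 * N) * (∫ r in Set.Ioi (0:ℝ), (deriv v r) ^ 2 * r ^ ((N:ℝ) - 1))
      = ∫ r in Set.Ioi (0:ℝ), F (v r) * r ^ ((N:ℝ) - 1) := by
  have hNR : (2:ℝ) ≤ N := by exact_mod_cast hN
  have hF' (u : ℝ) : HasDerivAt F (f u) u := by
    rw [funext hF]
    exact (hf.continuous.integral_hasStrictDerivAt 0 u).hasDerivAt
  have hFc : Continuous F := continuous_iff_continuousAt.2 fun u => (hF' u).continuousAt
  have hv1 : ContDiff ℝ 1 (deriv v) := ContDiff.deriv' (n := 1) hv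
  have hvO := isBigO_rpow_of_abs_le <| ((eventually_ge_atTop M).and (eventually_ge_atTop 0)).mono
    fun r hr => (abs_of_pos (hpos r hr.2)).trans_le (hbound r hr.1).1
  have hv'O := isBigO_rpow_of_abs_le <| (eventually_ge_atTop M).mono fun r hr => (hbound r hr).2
  have hdecay : (N:ℝ) - 1 - 2 * ((N + σ) / 2) < -1 := by linarith
  have hNpow : Continuous fun r : ℝ => r ^ ((N:ℝ) - 1) :=
    Real.continuous_rpow_const (by linarith)
  have hA : IntegrableOn (fun r => deriv v r ^ 2 * r ^ ((N:ℝ) - 1)) (Ioi 0) :=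
    integrableOn_Ioi_of_isBigO_sq_mul_rpow ((hv1.continuous.pow 2).mul hNpow) (isBigO_refl _ _)
      hv'O hdecay
  have hFv : (fun r => F (v r)) =O[atTop] fun r => v r ^ 2 := by
    rw [funext hF]
    exact (isBigO_integral_sq hf.continuous (hf.differentiable one_ne_zero 0) hf0).comp_tendsto
      (hvO.trans_tendsto (tendsto_rpow_neg_atTop (by positivity)))
  have hB : IntegrableOn (fun r => F (v r) * r ^ ((N:ℝ) - 1)) (Ioi 0) :=
    integrableOn_Ioi_of_isBigO_sq_mul_rpow ((hFc.comp hv.continuous).mul hNpow)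
      (hFv.mul (isBigO_refl _ _)) hvO hdecay
  have hFTC := integral_Ioi_of_hasDerivAt_of_tendsto
    (continuous_pohozaevEnergy (by positivity) hFc (hv.of_le (by norm_num))).continuousWithinAt
    (fun r hr => hasDerivAt_pohozaevEnergy hr (hv.differentiable (by norm_num) r)
      (hv1.differentiable one_ne_zero r) (hF' (v r)) (hode r hr))
    ((hB.const_mul _).sub (hA.const_mul _)) (tendsto_pohozaevEnergy_atTop hbdry1 hbdry2)
  rw [integral_sub (hB.const_mul _) (hA.const_mul _), integral_const_mul, integral_const_mul,
    pohozaevEnergy_zero (by positivity)] at hFTC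
  field_simp
  linarith

/-- Pohozaev-type identity for positive radial decaying solutions of
`-v'' - ((N-1)/r) v' = f(v)`. -/
theorem stmt_9 (N : ℕ) (hN : 2 ≤ N)
    (f : ℝ → ℝ) (hf : ContDiff ℝ 1 f) (hf0 : f 0 = 0)
    (F : ℝ → ℝ) (hF : ∀ u, F u = ∫ t in (0:ℝ)..u, f t)
    (v : ℝ → ℝ) (hv : ContDiff ℝ 2 v)
    (hpos : ∀ r, 0 ≤ r → 0 < v r)
    (hode : ∀ r, 0 < r →
      deriv (deriv v) r + ((N - 1 : ℝ) / r) * deriv v r + f (v r) = 0)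
    (hv'0 : deriv v 0 = 0)
    (C M σ : ℝ) (hC : 0 < C) (hM : 0 < M) (hσ : 0 < σ)
    (hbound : ∀ r : ℝ, M ≤ r →
      v r ≤ C * r ^ (-((N + σ) / 2)) ∧ |deriv v r| ≤ C * r ^ (-((N + σ) / 2)))
    (hbdry1 : Tendsto (fun r : ℝ => F (v r) * r ^ (N : ℝ)) atTop (nhds 0))
    (hbdry2 : Tendsto (fun r : ℝ => (deriv v r) ^ 2 * r ^ (N : ℝ)) atTop (nhds 0)) :
    ((N:ℝ) - 2) / (2 * N) * (∫ r in Set.Ioi (0:ℝ), (deriv v r) ^ 2 * r ^ ((N:ℝ) - 1))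
      = ∫ r in Set.Ioi (0:ℝ), F (v r) * r ^ ((N:ℝ) - 1) :=
  stmt_9_general N hN f hf hf0 F hF v hv hpos hode C M σ hσ hbound hbdry1 hbdry2
end

section
/- Write x = (y, z) ∈ ℝ^M × ℝ^{N-M} with N - M ≥ 3. Let u ∈ C²(ℝ^N) be a positive bounded function with -Δu ≤ 0 on {|z| ≥ r} for some r > 0, and with u(y,z) → 0 as |z| → ∞ uniformly in y. Then there exist C, R > 0 such that u(x) ≤ C |z|^{2-(N-M)} for all x with |z| ≥ R. -/
open Filter Set

/-- Second directional derivative of `u` at `x` in direction `e`. -/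
noncomputable def dir2 {E : Type*} [NormedAddCommGroup E] [NormedSpace ℝ E]
    (u : E → ℝ) (e : E) (x : E) : ℝ :=
  deriv (deriv (fun s : ℝ => u (x + s • e))) 0

/-- Laplacian on a product `ℝ^M × ℝ^K`, as the sum of second derivatives in
the coordinate directions. -/
noncomputable def lapProd {M K : ℕ}
    (u : EuclideanSpace ℝ (Fin M) × EuclideanSpace ℝ (Fin K) → ℝ)
    (x : EuclideanSpace ℝ (Fin M) × EuclideanSpace ℝ (Fin K)) : ℝ :=
  (∑ i : Fin M, dir2 u (EuclideanSpace.single i 1, 0) x) +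
    ∑ j : Fin K, dir2 u (0, EuclideanSpace.single j 1) x

/-!
Compare `u` with `Φ = λ |z|^{2-K} + ε |y - y₀|² - η |z|² + 2σ` on the slab `r ≤ |z| ≤ A`.
The barrier `|z|^{2-K}` is harmonic for `z ≠ 0`, and `λ` is chosen so that `λ r^{2-K}` bounds `u`;
`A` is chosen so that `u < σ` for `|z| ≥ A`, and `η A² = σ`. Then `u ≤ Φ` on both boundary pieces
of the slab, `u - Φ → -∞` as `|y| → ∞`, and `ΔΦ = 2Mε - 2Kη < 0 ≤ Δu`, so `u - Φ` has no interior
maximum. Hence `u ≤ Φ` on the slab; evaluating at `y = y₀` and letting `σ → 0` gives the bound.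
-/

open scoped Topology RealInnerProductSpace

local notation "ℝ^" n => EuclideanSpace ℝ (Fin n)

theorem IsLocalMax.deriv_deriv_nonpos {f : ℝ → ℝ} {a : ℝ} (h : IsLocalMax f a)
    (hc : ContinuousAt f a) : deriv (deriv f) a ≤ 0 := by
  by_contra! hpos
  have hmin : IsLocalMin f a := isLocalMin_of_deriv_deriv_pos hpos h.deriv_eq_zero hc
  have hconst : f =ᶠ[𝓝 a] fun _ => f a := (hmin.and h).mono fun _ hx => le_antisymm hx.2 hx.1
  have hderiv : deriv f =ᶠ[𝓝 a] fun _ => 0 := hconst.deriv.trans (by simp)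
  simp [hderiv.deriv_eq] at hpos

theorem deriv_deriv_eq_of_hasDerivAt {f f' : ℝ → ℝ} {a d : ℝ}
    (hf : ∀ᶠ t in 𝓝 a, HasDerivAt f (f' t) t) (hf' : HasDerivAt f' d a) :
    deriv (deriv f) a = d := by
  have hderiv : deriv f =ᶠ[𝓝 a] f' := hf.mono fun _ ht => ht.deriv
  rw [hderiv.deriv_eq, hf'.deriv]

theorem nonpos_of_forall_not_isLocalMax {X : Type*} [TopologicalSpace X] {w : X → ℝ}
    {S U : Set X} (hS : IsClosed S) (hU : IsOpen U) (hUS : U ⊆ S) (hw : ContinuousOn w S)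
    (hcocompact : ∀ᶠ x in cocompact X ⊓ 𝓟 S, w x ≤ 0) (hbdry : ∀ x ∈ S \ U, w x ≤ 0)
    (hmax : ∀ x ∈ U, ¬IsLocalMax w x) {x₀ : X} (hx₀ : x₀ ∈ S) : w x₀ ≤ 0 := by
  by_contra! hpos
  obtain ⟨xm, hxmS, hxm⟩ :=
    hw.exists_isMaxOn' hS hx₀ (hcocompact.mono fun _ hx => hx.trans hpos.le)
  by_cases hxmU : xm ∈ U
  · exact hmax xm hxmU (hxm.isLocalMax (mem_of_superset (hU.mem_nhds hxmU) hUS))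
  · exact (hpos.trans_le (hxm hx₀)).not_ge (hbdry xm ⟨hxmS, hxmU⟩)

theorem tendsto_norm_fst_sub_cocompact_inf {E F : Type*} [NormedAddCommGroup E]
    [NormedAddCommGroup F] [ProperSpace E] [ProperSpace F] (A : ℝ) (y₀ : E) :
    Tendsto (fun x : E × F => ‖x.1 - y₀‖) (cocompact (E × F) ⊓ 𝓟 {x | ‖x.2‖ ≤ A}) atTop := by
  have hnorm : Tendsto (fun x : E × F => ‖x‖ - (A + ‖y₀‖))
      (cocompact (E × F) ⊓ 𝓟 {x | ‖x.2‖ ≤ A}) atTop :=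
    tendsto_atTop_add_const_right _ _ (tendsto_norm_cocompact_atTop.mono_left inf_le_left)
  refine tendsto_atTop_mono' _ ?_ hnorm
  filter_upwards [mem_inf_of_right (mem_principal_self _)] with x hx
  have h1 : ‖x‖ ≤ ‖x.1‖ + A := by
    rw [Prod.norm_def]
    exact max_le (by linarith [norm_nonneg x.2, hx]) (by linarith [norm_nonneg x.1, hx])
  linarith [norm_sub_norm_le x.1 y₀]

section Dir2

variable {E : Type*} [NormedAddCommGroup E] [NormedSpace ℝ E] {u v : E → ℝ} {e x : E}

theorem dir2_eq_iteratedDeriv (u : E → ℝ) (e x : E) :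
    dir2 u e x = iteratedDeriv 2 (fun s : ℝ => u (x + s • e)) 0 := by
  simp [dir2, iteratedDeriv_succ]

theorem ContDiffAt.comp_line (hu : ContDiffAt ℝ 2 u x) (e : E) :
    ContDiffAt ℝ 2 (fun s : ℝ => u (x + s • e)) 0 :=
  ContDiffAt.comp (g := u) (0 : ℝ) (by simpa using hu) (by fun_prop)

theorem dir2_add (hu : ContDiffAt ℝ 2 u x) (hv : ContDiffAt ℝ 2 v x) :
    dir2 (fun y => u y + v y) e x = dir2 u e x + dir2 v e x := by
  simp only [dir2_eq_iteratedDeriv]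
  exact iteratedDeriv_fun_add (hu.comp_line e) (hv.comp_line e)

theorem dir2_sub (hu : ContDiffAt ℝ 2 u x) (hv : ContDiffAt ℝ 2 v x) :
    dir2 (fun y => u y - v y) e x = dir2 u e x - dir2 v e x := by
  simp only [dir2_eq_iteratedDeriv]
  exact iteratedDeriv_fun_sub (hu.comp_line e) (hv.comp_line e)

theorem dir2_const_mul (c : ℝ) : dir2 (fun y => c * u y) e x = c * dir2 u e x := by
  simp only [dir2_eq_iteratedDeriv]
  exact iteratedDeriv_fun_const_smul_field c _

theorem dir2_const (c : ℝ) : dir2 (fun _ => c) e x = 0 := by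
  simp [dir2]

theorem dir2_zero_dir (u : E → ℝ) (x : E) : dir2 u 0 x = 0 := by
  simp [dir2]

theorem dir2_nonpos_of_isLocalMax (h : IsLocalMax u x) (hc : ContinuousAt u x) (e : E) :
    dir2 u e x ≤ 0 := by
  have hline : ContinuousAt (fun s : ℝ => x + s • e) 0 := by fun_prop
  have hx : x + (0 : ℝ) • e = x := by simp
  rw [← hx] at h hc
  exact IsLocalMax.deriv_deriv_nonpos (h.comp_continuous (g := fun s : ℝ => x + s • e) hline)
    (hc.comp (g := u) (f := fun s : ℝ => x + s • e) hline)

end Dir2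

section Radial

variable {F : Type*} [NormedAddCommGroup F] [InnerProductSpace ℝ F]

theorem norm_add_smul_sq (w e : F) (s : ℝ) :
    ‖w + s • e‖ ^ 2 = ‖w‖ ^ 2 + 2 * ⟪w, e⟫ * s + ‖e‖ ^ 2 * s ^ 2 := by
  rw [norm_add_sq_real, real_inner_smul_right, norm_smul, mul_pow, Real.norm_eq_abs, sq_abs]
  ring

theorem dir2_comp_norm_sub_sq {f : ℝ → ℝ} {a z : F} (hf : ContDiffAt ℝ 2 f (‖z - a‖ ^ 2))
    (e : F) :
    dir2 (fun z => f (‖z - a‖ ^ 2)) e z =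
      2 * ‖e‖ ^ 2 * deriv f (‖z - a‖ ^ 2) + 4 * ⟪z - a, e⟫ ^ 2 * deriv (deriv f) (‖z - a‖ ^ 2) := by
  set c := ‖z - a‖ ^ 2
  set Q : ℝ → ℝ := fun s => c + 2 * ⟪z - a, e⟫ * s + ‖e‖ ^ 2 * s ^ 2
  set Q' : ℝ → ℝ := fun s => 2 * ⟪z - a, e⟫ + 2 * ‖e‖ ^ 2 * s
  have hline : (fun s : ℝ => f (‖z + s • e - a‖ ^ 2)) = f ∘ Q := by
    ext s
    simp only [Function.comp, Q, c, ← norm_add_smul_sq, sub_add_eq_add_sub]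
  have hQ : ∀ s, HasDerivAt Q (Q' s) s := fun s => by
    have h := (((hasDerivAt_id s).const_mul (2 * ⟪z - a, e⟫)).const_add c).fun_add
      ((hasDerivAt_pow 2 s).const_mul (‖e‖ ^ 2))
    exact h.congr_deriv (by simp only [Q']; ring)
  have hQ0 : Q 0 = c := by simp [Q]
  have hQc : Tendsto Q (𝓝 0) (𝓝 c) := hQ0 ▸ (hQ 0).continuousAt.tendsto
  have hf1 : ∀ᶠ t in 𝓝 c, HasDerivAt f (deriv f t) t :=
    (hf.eventually (by simp)).mono fun t ht =>
      (ht.differentiableAt (by norm_num)).hasDerivAt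
  have hf2 : HasDerivAt (deriv f) (deriv (deriv f) c) c :=
    ((hf.derivWithin (m := 1) (by norm_num)).differentiableAt (by norm_num)).hasDerivAt
  have hF : ∀ᶠ s in 𝓝 0, HasDerivAt (f ∘ Q) (deriv f (Q s) * Q' s) s :=
    (hQc.eventually hf1).mono fun s hs => hs.comp s (hQ s)
  have hF' : HasDerivAt (fun s => deriv f (Q s) * Q' s)
      (deriv (deriv f) c * Q' 0 * Q' 0 + deriv f c * (2 * ‖e‖ ^ 2)) 0 := by
    have h1 := (hQ0 ▸ hf2 : HasDerivAt (deriv f) (deriv (deriv f) c) (Q 0)).comp 0 (hQ 0)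
    have h2 : HasDerivAt Q' (2 * ‖e‖ ^ 2) 0 := by
      simpa [Q'] using ((hasDerivAt_id (0 : ℝ)).const_mul (2 * ‖e‖ ^ 2)).const_add
        (2 * ⟪z - a, e⟫)
    simpa [hQ0] using h1.fun_mul h2
  rw [dir2, hline, deriv_deriv_eq_of_hasDerivAt hF hF']
  simp only [Q']
  ring

end Radial

section Euclidean

variable {n : ℕ}

theorem sum_dir2_comp_norm_sub_sq {f : ℝ → ℝ} {a z : EuclideanSpace ℝ (Fin n)}
    (hf : ContDiffAt ℝ 2 f (‖z - a‖ ^ 2)) :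
    ∑ j, dir2 (fun z => f (‖z - a‖ ^ 2)) (EuclideanSpace.single j 1) z =
      2 * n * deriv f (‖z - a‖ ^ 2) + 4 * ‖z - a‖ ^ 2 * deriv (deriv f) (‖z - a‖ ^ 2) := by
  have hsq : ∑ j, ⟪z - a, EuclideanSpace.single j 1⟫ ^ 2 = ‖z - a‖ ^ 2 := by
    simp [EuclideanSpace.inner_single_right, EuclideanSpace.norm_sq_eq]
  simp only [dir2_comp_norm_sub_sq hf, PiLp.norm_single, norm_one, Finset.sum_add_distrib,
    ← Finset.sum_mul, ← Finset.mul_sum, hsq, Finset.sum_const, Finset.card_univ,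
    Fintype.card_fin, nsmul_eq_mul]
  ring

theorem sum_dir2_norm_sub_sq (a z : EuclideanSpace ℝ (Fin n)) :
    ∑ j, dir2 (fun z => ‖z - a‖ ^ 2) (EuclideanSpace.single j 1) z = 2 * n := by
  simpa using sum_dir2_comp_norm_sub_sq (f := id) (a := a) (z := z) contDiffAt_id

theorem sum_dir2_norm_rpow_two_sub {z : EuclideanSpace ℝ (Fin n)} (hz : z ≠ 0) :
    ∑ j, dir2 (fun z => ‖z‖ ^ ((2 : ℝ) - n)) (EuclideanSpace.single j 1) z = 0 := by
  set q : ℝ := (2 - n) / 2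
  have hV : (fun z : EuclideanSpace ℝ (Fin n) => ‖z‖ ^ ((2 : ℝ) - n)) =
      fun z => (‖z - 0‖ ^ 2) ^ q := by
    ext z
    rw [sub_zero, ← Real.rpow_natCast, ← Real.rpow_mul (norm_nonneg z)]
    norm_num [q]
    ring_nf
  have hc : ‖z - 0‖ ^ 2 ≠ 0 := by simpa using hz
  rw [hV, sum_dir2_comp_norm_sub_sq (Real.contDiffAt_rpow_const_of_ne hc), Real.deriv_rpow_const',
    deriv_const_mul_field']
  beta_reduce
  rw [Real.deriv_rpow_const, Real.rpow_sub_one hc (q - 1)]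
  generalize ‖z - 0‖ ^ 2 = c at hc ⊢
  field_simp
  ring

end Euclidean

section Product

variable {E F : Type*} [NormedAddCommGroup E] [NormedSpace ℝ E] [NormedAddCommGroup F]
  [NormedSpace ℝ F]

theorem dir2_comp_fst (h : E → ℝ) (a : E) (b : F) (x : E × F) :
    dir2 (fun x => h x.1) (a, b) x = dir2 h a x.1 := by
  simp [dir2]

theorem dir2_comp_snd (h : F → ℝ) (a : E) (b : F) (x : E × F) :
    dir2 (fun x => h x.2) (a, b) x = dir2 h b x.2 := by
  simp [dir2]

end Product

section LapProd

variable {M K : ℕ} {u v : (ℝ^M) × (ℝ^K) → ℝ} {x : (ℝ^M) × (ℝ^K)}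

theorem lapProd_comp_fst (h : (ℝ^M) → ℝ) (x : (ℝ^M) × (ℝ^K)) :
    lapProd (fun x => h x.1) x = ∑ i, dir2 h (EuclideanSpace.single i 1) x.1 := by
  simp [lapProd, dir2_comp_fst, dir2_zero_dir]

theorem lapProd_comp_snd (h : (ℝ^K) → ℝ) (x : (ℝ^M) × (ℝ^K)) :
    lapProd (fun x => h x.2) x = ∑ j, dir2 h (EuclideanSpace.single j 1) x.2 := by
  simp [lapProd, dir2_comp_snd, dir2_zero_dir]

theorem lapProd_add (hu : ContDiffAt ℝ 2 u x) (hv : ContDiffAt ℝ 2 v x) :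
    lapProd (fun y => u y + v y) x = lapProd u x + lapProd v x := by
  simp only [lapProd, dir2_add hu hv, Finset.sum_add_distrib]
  ring

theorem lapProd_sub (hu : ContDiffAt ℝ 2 u x) (hv : ContDiffAt ℝ 2 v x) :
    lapProd (fun y => u y - v y) x = lapProd u x - lapProd v x := by
  simp only [lapProd, dir2_sub hu hv, Finset.sum_sub_distrib]
  ring

theorem lapProd_const_mul (c : ℝ) : lapProd (fun y => c * u y) x = c * lapProd u x := by
  simp only [lapProd, dir2_const_mul, ← Finset.mul_sum, mul_add]

theorem lapProd_add_const (hu : ContDiffAt ℝ 2 u x) (c : ℝ) :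
    lapProd (fun y => u y + c) x = lapProd u x := by
  rw [lapProd_add hu contDiffAt_const]
  simp [lapProd, dir2_const]

theorem lapProd_nonpos_of_isLocalMax (h : IsLocalMax u x) (hc : ContinuousAt u x) :
    lapProd u x ≤ 0 :=
  add_nonpos (Finset.sum_nonpos fun _ _ => dir2_nonpos_of_isLocalMax h hc _)
    (Finset.sum_nonpos fun _ _ => dir2_nonpos_of_isLocalMax h hc _)

end LapProd

noncomputable def comparison {M K : ℕ} (lam eps eta c : ℝ) (y₀ : ℝ^M) (x : (ℝ^M) × (ℝ^K)) : ℝ :=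
  lam * ‖x.2‖ ^ ((2 : ℝ) - K) + eps * ‖x.1 - y₀‖ ^ 2 - eta * ‖x.2‖ ^ 2 + c

section Comparison

variable {M K : ℕ} {u : (ℝ^M) × (ℝ^K) → ℝ} {lam eps eta c : ℝ} {y₀ : ℝ^M} {x : (ℝ^M) × (ℝ^K)}

theorem contDiffAt_norm_snd_rpow (hx : x.2 ≠ 0) (p : ℝ) :
    ContDiffAt ℝ 2 (fun x : (ℝ^M) × (ℝ^K) => ‖x.2‖ ^ p) x :=
  (contDiffAt_snd.norm ℝ hx).rpow_const_of_ne (norm_ne_zero_iff.mpr hx)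

theorem contDiffAt_comparison (hx : x.2 ≠ 0) :
    ContDiffAt ℝ 2 (comparison lam eps eta c y₀) x := by
  have hV := contDiffAt_norm_snd_rpow hx ((2 : ℝ) - K)
  have hN₁ : ContDiffAt ℝ 2 (fun x : (ℝ^M) × (ℝ^K) => ‖x.1 - y₀‖ ^ 2) x :=
    (contDiffAt_fst.sub contDiffAt_const).norm_sq ℝ
  have hN₂ : ContDiffAt ℝ 2 (fun x : (ℝ^M) × (ℝ^K) => ‖x.2‖ ^ 2) x := contDiffAt_snd.norm_sq ℝ
  unfold comparison
  fun_prop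

theorem lapProd_comparison (hx : x.2 ≠ 0) :
    lapProd (comparison lam eps eta c y₀) x = 2 * M * eps - 2 * K * eta := by
  have hV := contDiffAt_norm_snd_rpow hx ((2 : ℝ) - K)
  have hN₁ : ContDiffAt ℝ 2 (fun x : (ℝ^M) × (ℝ^K) => ‖x.1 - y₀‖ ^ 2) x :=
    (contDiffAt_fst.sub contDiffAt_const).norm_sq ℝ
  have hN₂ : ContDiffAt ℝ 2 (fun x : (ℝ^M) × (ℝ^K) => ‖x.2‖ ^ 2) x := contDiffAt_snd.norm_sq ℝ
  have hΔN₂ : ∑ j, dir2 (fun z => ‖z‖ ^ 2) (EuclideanSpace.single j 1) x.2 = 2 * K := by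
    simpa using sum_dir2_norm_sub_sq 0 x.2
  unfold comparison
  rw [lapProd_add_const (by fun_prop), lapProd_sub (by fun_prop) (by fun_prop),
    lapProd_add (by fun_prop) (by fun_prop), lapProd_const_mul, lapProd_const_mul,
    lapProd_const_mul, lapProd_comp_snd (fun z => ‖z‖ ^ ((2 : ℝ) - K)),
    lapProd_comp_fst (fun y => ‖y - y₀‖ ^ 2), lapProd_comp_snd (fun z => ‖z‖ ^ 2),
    sum_dir2_norm_rpow_two_sub hx, sum_dir2_norm_sub_sq, hΔN₂]
  ring

theorem not_isLocalMax_sub_comparison (hu : ContDiff ℝ 2 u) (hx : x.2 ≠ 0)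
    (hsub : 0 ≤ lapProd u x) (hepseta : M * eps < K * eta) :
    ¬IsLocalMax (fun x => u x - comparison lam eps eta c y₀ x) x := by
  intro hmax
  have hw := hu.contDiffAt.sub (contDiffAt_comparison (lam := lam) (eps := eps) (eta := eta)
    (c := c) (y₀ := y₀) hx)
  have hlap := lapProd_nonpos_of_isLocalMax hmax hw.continuousAt
  rw [lapProd_sub hu.contDiffAt (contDiffAt_comparison hx), lapProd_comparison hx] at hlap
  linarith

end Comparison

section Subharmonic

variable {M K : ℕ} {u : (ℝ^M) × (ℝ^K) → ℝ}

theorem le_comparison_of_subharmonic (hu : ContDiff ℝ 2 u) {B r A lam eps eta σ : ℝ}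
    (hB : ∀ x, u x ≤ B) (hr : 0 < r) (hsub : ∀ x, r ≤ ‖x.2‖ → 0 ≤ lapProd u x) (hlam : 0 ≤ lam)
    (hinner : ∀ x, ‖x.2‖ = r → u x ≤ lam * ‖x.2‖ ^ ((2 : ℝ) - K))
    (hA : ∀ x, A ≤ ‖x.2‖ → u x < σ) (heps : 0 < eps) (hetaA : eta * A ^ 2 ≤ σ)
    (hepseta : M * eps < K * eta) (y₀ : ℝ^M) {x : (ℝ^M) × (ℝ^K)} (hx : r ≤ ‖x.2‖)
    (hxA : ‖x.2‖ ≤ A) :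
    u x ≤ comparison lam eps eta (2 * σ) y₀ x := by
  set S : Set ((ℝ^M) × (ℝ^K)) := {x | r ≤ ‖x.2‖ ∧ ‖x.2‖ ≤ A}
  set U : Set ((ℝ^M) × (ℝ^K)) := {x | r < ‖x.2‖ ∧ ‖x.2‖ < A}
  have heta : 0 ≤ eta := by
    by_contra! h
    nlinarith [(Nat.cast_nonneg M : (0 : ℝ) ≤ M), (Nat.cast_nonneg K : (0 : ℝ) ≤ K)]
  have hσ : 0 ≤ σ := (by positivity : 0 ≤ eta * A ^ 2).trans hetaA
  have hne : ∀ x ∈ S, x.2 ≠ 0 := fun x hx => norm_ne_zero_iff.mp (hr.trans_le hx.1).ne'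
  have hle : ∀ x ∈ S, u x - comparison lam eps eta (2 * σ) y₀ x ≤
      u x - lam * ‖x.2‖ ^ ((2 : ℝ) - K) - eps * ‖x.1 - y₀‖ ^ 2 - σ := by
    intro x hx
    have hetaz : eta * ‖x.2‖ ^ 2 ≤ σ :=
      (mul_le_mul_of_nonneg_left (pow_le_pow_left₀ (norm_nonneg _) hx.2 2) heta).trans hetaA
    simp only [comparison]
    linarith
  have hV : ∀ x : (ℝ^M) × (ℝ^K), 0 ≤ lam * ‖x.2‖ ^ ((2 : ℝ) - K) := fun x => by positivity
  have hN : ∀ x : (ℝ^M) × (ℝ^K), 0 ≤ eps * ‖x.1 - y₀‖ ^ 2 := fun x => by positivity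
  refine sub_nonpos.mp (nonpos_of_forall_not_isLocalMax (U := U)
    ((isClosed_le continuous_const continuous_snd.norm).inter
      (isClosed_le continuous_snd.norm continuous_const))
    ((isOpen_lt continuous_const continuous_snd.norm).inter
      (isOpen_lt continuous_snd.norm continuous_const))
    (fun x hx => ⟨hx.1.le, hx.2.le⟩)
    (fun x hx =>
      (hu.contDiffAt.sub (contDiffAt_comparison (hne x hx))).continuousAt.continuousWithinAt)
    ?_ ?_
    (fun x hx =>
      not_isLocalMax_sub_comparison hu (hne x ⟨hx.1.le, hx.2.le⟩) (hsub x hx.1.le) hepseta)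
    ⟨hx, hxA⟩)
  · have hcoercive := ((tendsto_pow_atTop two_ne_zero).comp
      (tendsto_norm_fst_sub_cocompact_inf A y₀)).mono_left
      (inf_le_inf_left _ (principal_mono.2 fun x (hx : x ∈ S) => hx.2))
    filter_upwards [hcoercive.eventually_ge_atTop (B / eps), mem_inf_of_right (mem_principal_self S)]
      with x hx hxS
    have hepsN : B ≤ eps * ‖x.1 - y₀‖ ^ 2 := by rwa [div_le_iff₀' heps] at hx
    linarith [hle x hxS, hB x, hV x]
  · rintro x ⟨hxS, hxU⟩
    rcases not_and_or.mp hxU with h | h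
    · linarith [hle x hxS, hinner x (le_antisymm (not_lt.mp h) hxS.1), hN x]
    · linarith [hle x hxS, hA x (not_lt.mp h), hV x, hN x]

theorem le_mul_rpow_of_subharmonic (hK : 0 < K) (hu : ContDiff ℝ 2 u)
    (hbdd : ∃ B : ℝ, ∀ x, u x ≤ B) {r lam : ℝ} (hr : 0 < r)
    (hsub : ∀ x, r ≤ ‖x.2‖ → 0 ≤ lapProd u x)
    (hdecay : ∀ ε : ℝ, 0 < ε → ∃ R : ℝ, ∀ x : (ℝ^M) × (ℝ^K), R ≤ ‖x.2‖ → u x < ε)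
    (hlam : 0 ≤ lam) (hinner : ∀ x, ‖x.2‖ = r → u x ≤ lam * ‖x.2‖ ^ ((2 : ℝ) - K))
    {x : (ℝ^M) × (ℝ^K)} (hx : r ≤ ‖x.2‖) :
    u x ≤ lam * ‖x.2‖ ^ ((2 : ℝ) - K) := by
  obtain ⟨B, hB⟩ := hbdd
  refine le_of_forall_pos_le_add fun δ hδ => ?_
  obtain ⟨A₀, hA₀⟩ := hdecay (δ / 2) (half_pos hδ)
  set A := max A₀ ‖x.2‖
  have hA : 0 < A := hr.trans_le (hx.trans (le_max_right _ _))
  set eta := δ / 2 / A ^ 2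
  have heta : 0 < eta := by positivity
  have hepseta : M * (eta / (M + 1)) < K * eta := by
    have hK1 : (1 : ℝ) ≤ K := by exact_mod_cast hK
    have hKeta : eta ≤ K * eta := le_mul_of_one_le_left heta.le hK1
    rw [mul_div_assoc', div_lt_iff₀ (by positivity)]
    nlinarith [(Nat.cast_nonneg M : (0 : ℝ) ≤ M)]
  have h := le_comparison_of_subharmonic hu hB hr hsub hlam hinner
    (fun y hy => hA₀ y ((le_max_left _ _).trans hy)) (by positivity)
    (div_mul_cancel₀ _ (by positivity)).le hepseta x.1 hx (le_max_right _ _)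
  have hz : 0 ≤ eta * ‖x.2‖ ^ 2 := by positivity
  simp only [comparison, sub_self, norm_zero] at h
  linarith

end Subharmonic

theorem stmt_11_general (M K : ℕ) (hK : 3 ≤ K)
    (u : EuclideanSpace ℝ (Fin M) × EuclideanSpace ℝ (Fin K) → ℝ)
    (hu : ContDiff ℝ 2 u)
    (hbdd : ∃ B : ℝ, ∀ x, u x ≤ B)
    (r : ℝ) (hr : 0 < r)
    (hsub : ∀ x, r ≤ ‖x.2‖ → 0 ≤ lapProd u x)
    (hdecay : ∀ ε : ℝ, 0 < ε → ∃ R : ℝ, ∀ x : EuclideanSpace ℝ (Fin M) × EuclideanSpace ℝ (Fin K),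
      R ≤ ‖x.2‖ → u x < ε) :
    ∃ C R : ℝ, 0 < C ∧ 0 < R ∧
      ∀ x : EuclideanSpace ℝ (Fin M) × EuclideanSpace ℝ (Fin K),
        R ≤ ‖x.2‖ → u x ≤ C * ‖x.2‖ ^ ((2:ℝ) - K) := by
  obtain ⟨B, hB⟩ := hbdd
  have hrK : 0 < r ^ ((2 : ℝ) - K) := Real.rpow_pos_of_pos hr _
  have hlam : 0 < max B 1 / r ^ ((2 : ℝ) - K) := div_pos (lt_max_of_lt_right one_pos) hrK
  refine ⟨_, r, hlam, hr, fun x hx =>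
    le_mul_rpow_of_subharmonic (by omega) hu ⟨B, hB⟩ hr hsub hdecay hlam.le (fun y hy => ?_) hx⟩
  rw [hy, div_mul_cancel₀ _ hrK.ne']
  exact (hB y).trans (le_max_left B 1)

/-- A positive bounded function, subharmonic for `|z|` large and decaying in `z`
uniformly in `y`, decays like `|z|^{2-K}` (`K = N - M ≥ 3`). -/
theorem stmt_11 (M K : ℕ) (hK : 3 ≤ K)
    (u : EuclideanSpace ℝ (Fin M) × EuclideanSpace ℝ (Fin K) → ℝ)
    (hu : ContDiff ℝ 2 u)
    (hpos : ∀ x, 0 < u x)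
    (hbdd : ∃ B : ℝ, ∀ x, u x ≤ B)
    (r : ℝ) (hr : 0 < r)
    (hsub : ∀ x, r ≤ ‖x.2‖ → 0 ≤ lapProd u x)
    (hdecay : ∀ ε : ℝ, 0 < ε → ∃ R : ℝ, ∀ x : EuclideanSpace ℝ (Fin M) × EuclideanSpace ℝ (Fin K),
      R ≤ ‖x.2‖ → u x < ε) :
    ∃ C R : ℝ, 0 < C ∧ 0 < R ∧
      ∀ x : EuclideanSpace ℝ (Fin M) × EuclideanSpace ℝ (Fin K),
        R ≤ ‖x.2‖ → u x ≤ C * ‖x.2‖ ^ ((2:ℝ) - K) :=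
  stmt_11_general M K hK u hu hbdd r hr hsub hdecay
end
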